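/- arXiv:hep-th/0503094 — 2 statements merged into one kernel-verified Lean document; each statement's English description precedes it below -/
import Mathlib

section
/- Let (V, J, g) be a para-Hermitian vector space with fundamental form ω : V → V*. On N := V ⊕ V* define J₁ = [[J,0],[0,J*]], J₂ = [[0,ω⁻¹],[ω,0]], and J₃ = J₁J₂. Then J₁J₂ = −J₂J₁, so (J₁, J₂, J₃) is a para-hypercomplex structure: J₁² = J₂² = Id and J₃² = −Id. -/
/-- The block endomorphism `J₁ = [[J, 0],[0, J*]]` of `V ⊕ V*`. -/
noncomputable def Jone {V : Type*} [AddCommGroup V] [Module ℝ V]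
    (J : V →ₗ[ℝ] V) :
    V × Module.Dual ℝ V → V × Module.Dual ℝ V :=
  fun p => (J p.1, p.2.comp J)

/-- The block endomorphism `J₂ = [[0, ω⁻¹],[ω, 0]]` of `V ⊕ V*`. -/
noncomputable def Jtwo {V : Type*} [AddCommGroup V] [Module ℝ V]
    (ω : V ≃ₗ[ℝ] Module.Dual ℝ V) :
    V × Module.Dual ℝ V → V × Module.Dual ℝ V :=
  fun p => (ω.symm p.2, ω p.1)

/-- Let `(V, J, g)` be a para-Hermitian vector space with fundamental form
`ω : V ≃ V*`, `ω v = g(Jv, ·)`. On `N = V ⊕ V*` the structures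
`J₁ = [[J,0],[0,J*]]`, `J₂ = [[0,ω⁻¹],[ω,0]]`, `J₃ = J₁J₂` satisfy
`J₁J₂ = -J₂J₁`, `J₁² = J₂² = Id`, `J₃² = -Id`: a para-hypercomplex structure. -/
theorem stmt8 (V : Type*) [AddCommGroup V] [Module ℝ V]
    (g : LinearMap.BilinForm ℝ V) (hnd : g.Nondegenerate)
    (hsym : ∀ x y : V, g x y = g y x)
    (J : V →ₗ[ℝ] V) (hJ : ∀ x : V, J (J x) = x)
    (hskew : ∀ x y : V, g (J x) y = - g x (J y))
    (ω : V ≃ₗ[ℝ] Module.Dual ℝ V) (hω : ∀ v w : V, ω v w = g (J v) w)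
    (J₃ : V × Module.Dual ℝ V → V × Module.Dual ℝ V)
    (hJ₃ : ∀ p, J₃ p = Jone J (Jtwo ω p)) :
    (∀ p : V × Module.Dual ℝ V, Jone J (Jtwo ω p) = - Jtwo ω (Jone J p)) ∧
    (∀ p : V × Module.Dual ℝ V, Jone J (Jone J p) = p) ∧
    (∀ p : V × Module.Dual ℝ V, Jtwo ω (Jtwo ω p) = p) ∧
    (∀ p : V × Module.Dual ℝ V, J₃ (J₃ p) = -p) := by
  have key : ∀ v : V, ω (J v) = - (ω v).comp J := by
    intro v
    ext w
    simp [hω, hJ, hskew (J v) w, hskew v (J w), hJ]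
  have key2 : ∀ α : Module.Dual ℝ V, ω.symm (α.comp J) = - J (ω.symm α) := by
    intro α
    apply ω.injective
    rw [LinearEquiv.apply_symm_apply, map_neg, key, neg_neg,
      LinearEquiv.apply_symm_apply]
  have hanti : ∀ p : V × Module.Dual ℝ V,
      Jone J (Jtwo ω p) = - Jtwo ω (Jone J p) := by
    rintro ⟨v, α⟩
    simp only [Jone, Jtwo, Prod.neg_mk]
    refine Prod.ext ?_ ?_
    · show J (ω.symm α) = - ω.symm (α.comp J); rw [key2 α]; simp
    · show (ω v).comp J = - ω (J v); rw [key v]; simp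
  have hsq1 : ∀ p : V × Module.Dual ℝ V, Jone J (Jone J p) = p := by
    rintro ⟨v, α⟩
    simp only [Jone]
    refine Prod.ext (hJ v) ?_
    ext w
    simp [hJ]
  have hsq2 : ∀ p : V × Module.Dual ℝ V, Jtwo ω (Jtwo ω p) = p := by
    rintro ⟨v, α⟩
    simp [Jtwo]
  refine ⟨hanti, hsq1, hsq2, ?_⟩
  intro p
  rw [hJ₃, hJ₃, hanti (Jone J (Jtwo ω p))]
  rw [hsq1, hsq2]
end

section
/- Let ∇ be a torsion-free connection on a manifold M and J an endomorphism field with J² = Id such that ∇J is symmetric, i.e., (∇_X J)Y = (∇_Y J)X. Then the connection D := ∇ + ½ J(∇J) is torsion-free and satisfies DJ = 0. -/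
/-- Let `∇` be a torsion-free connection on (the vector fields of) a manifold, modelled
by a Lie ring `V` of vector fields, and `J` an endomorphism field with `J² = Id` such
that the tensor `(∇J)(X,Y) = (∇_X J)Y = ∇_X(JY) - J(∇_X Y)` is symmetric. Then the
connection `D := ∇ + ½ J(∇J)` is torsion-free and satisfies `DJ = 0`. -/
theorem stmt11 (V : Type*) [LieRing V] [Module ℝ V]
    (nabla : V → V → V)
    (J : V →ₗ[ℝ] V) (hJ : ∀ x : V, J (J x) = x)
    (htf : ∀ X Y : V, nabla X Y - nabla Y X = ⁅X, Y⁆)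
    (A : V → V → V) (hA : ∀ X Y : V, A X Y = nabla X (J Y) - J (nabla X Y))
    (hsymA : ∀ X Y : V, A X Y = A Y X)
    (D : V → V → V) (hD : ∀ X Y : V, D X Y = nabla X Y + (1 / 2 : ℝ) • J (A X Y)) :
    (∀ X Y : V, D X Y - D Y X = ⁅X, Y⁆) ∧
    (∀ X Y : V, D X (J Y) - J (D X Y) = 0) := by
  constructor
  · intro X Y
    rw [hD, hD, hsymA Y X, ← htf]
    abel
  · intro X Y
    have hAJ : A X (J Y) = -J (A X Y) := by
      rw [hA, hA, map_sub, hJ, hJ]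
      abel
    rw [hD, hD, hAJ, map_add, map_smul, hJ, map_neg, hJ, hA]
    module
end
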